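/- arXiv:2203.13421 — 3 statements merged into one kernel-verified Lean document; each statement's English description precedes it below -/
import Mathlib

section
/- For any hypothesis class H of functions X → {0,1} and any manipulation relation → on X, the VC-dimension of H is at most the VC-dimension of the strategic loss class H_{ℓ→}. -/
open MeasureTheory

open Classical in
noncomputable def l01 {X : Type*} (h : X → Bool) (x : X) (y : Bool) : ℝ :=
  if h x ≠ y then 1 else 0

open Classical in
noncomputable def lsc {X : Type*} (R : X → X → Prop) (h : X → Bool) (x : X) : ℝ :=
  if h x = false ∧ ∃ x', R x x' ∧ h x' = true then 1 else 0

open Classical in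
noncomputable def lstr {X : Type*} (R : X → X → Prop) (h : X → Bool) (x : X) (y : Bool) : ℝ :=
  if h x ≠ y ∨ (h x = false ∧ ∃ x', R x x' ∧ h x' = true) then 1 else 0

def lossSet01 {X : Type*} (h : X → Bool) : Set (X × Bool) := {p | h p.1 ≠ p.2}

def lossSetSc {X : Type*} (R : X → X → Prop) (h : X → Bool) : Set (X × Bool) :=
  {p | h p.1 = false ∧ ∃ x', R p.1 x' ∧ h x' = true}

def lossSetStr {X : Type*} (R : X → X → Prop) (h : X → Bool) : Set (X × Bool) :=
  {p | h p.1 ≠ p.2 ∨ (h p.1 = false ∧ ∃ x', R p.1 x' ∧ h x' = true)}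

def graphOf {X : Type*} (h : X → Bool) : Set (X × Bool) := {p | p.2 = h p.1}

def Shatters {Z : Type*} (U : Set (Set Z)) (S : Finset Z) : Prop :=
  ∀ T ⊆ S, ∃ u ∈ U, ∀ z ∈ S, (z ∈ u ↔ z ∈ T)

noncomputable def vcDim {Z : Type*} (U : Set (Set Z)) : ℕ∞ :=
  ⨆ (S : Finset Z) (_ : Shatters U S), (S.card : ℕ∞)

def ShattersF {X : Type*} (H : Set (X → Bool)) (S : Finset X) : Prop :=
  ∀ f : X → Bool, ∃ h ∈ H, ∀ x ∈ S, h x = f x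

noncomputable def vcDimF {X : Type*} (H : Set (X → Bool)) : ℕ∞ :=
  ⨆ (S : Finset X) (_ : ShattersF H S), (S.card : ℕ∞)

noncomputable def sLoss {X : Type*} [MeasurableSpace X] (P : Measure (X × Bool))
    (R : X → X → Prop) (h : X → Bool) : ℝ := ∫ p, lstr R h p.1 p.2 ∂P

noncomputable def bLoss {X : Type*} [MeasurableSpace X] (P : Measure (X × Bool))
    (h : X → Bool) : ℝ := ∫ p, l01 h p.1 p.2 ∂P

noncomputable def scLoss {X : Type*} [MeasurableSpace X] (PX : Measure X)
    (R : X → X → Prop) (h : X → Bool) : ℝ := ∫ x, lsc R h x ∂PX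

noncomputable def gdist {X : Type*} [MeasurableSpace X] (H : Set (X → Bool))
    (PX : Measure X) (R R' : X → X → Prop) : ℝ :=
  ⨆ h : H, ∫ x, |lsc R h.1 x - lsc R' h.1 x| ∂PX

open Classical in
noncomputable def lgr {X : Type*} (h : X → Bool) (R' : X → X → Prop) (x : X) (B : Set X) : ℝ :=
  if (h x = false ∧ (∃ x' ∈ B, h x' = true) ∧ (∀ x'', R' x x'' → h x'' = false)) ∨
     (h x = false ∧ (∀ x' ∈ B, h x' = false) ∧ (∃ x'', R' x x'' ∧ h x'' = true)) then 1 else 0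

def grLossSet {X : Type*} (h : X → Bool) (R' : X → X → Prop) : Set (X × Set X) :=
  {p | lgr h R' p.1 p.2 = 1}

/-!
A set shattered by the graphs of `H` contains at most one point over each `x`, so it is as large
as its projection to `X`, on which `H` realises every labelling. Labelling `x` by `false` is the
same as putting `(x, true)` into the strategic loss set, so the loss sets shatter the lift of that
projection to `X × {true}`.
-/

section Shattering

variable {X : Type*}

lemma mem_lossSetStr_true (R : X → X → Prop) (h : X → Bool) (x : X) :
    (x, true) ∈ lossSetStr R h ↔ h x = false := by
  cases hx : h x <;> simp [lossSetStr, hx]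

lemma Shatters.injOn_fst_of_graphOf {H : Set (X → Bool)} {S : Finset (X × Bool)}
    (hS : Shatters {s | ∃ h ∈ H, s = graphOf h} S) :
    Set.InjOn Prod.fst (S : Set (X × Bool)) := by
  obtain ⟨_, ⟨h₀, -, rfl⟩, hh₀⟩ := hS S (Finset.Subset.refl S)
  intro p hp q hq hpq
  have hp₂ : p.2 = h₀ p.1 := (hh₀ p hp).2 hp
  have hq₂ : q.2 = h₀ q.1 := (hh₀ q hq).2 hq
  exact Prod.ext hpq (by rw [hp₂, hq₂, hpq])

lemma Shatters.shattersF_image_fst_of_graphOf [DecidableEq X] {H : Set (X → Bool)}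
    {S : Finset (X × Bool)}
    (hS : Shatters {s | ∃ h ∈ H, s = graphOf h} S) : ShattersF H (S.image Prod.fst) := by
  intro f
  obtain ⟨_, ⟨h, hH, rfl⟩, hh⟩ :=
    hS (S.filter fun p => p.2 = f p.1) (Finset.filter_subset _ _)
  refine ⟨h, hH, Finset.forall_mem_image.2 fun p hp => ?_⟩
  have hiff : p.2 = h p.1 ↔ p.2 = f p.1 := by simpa [graphOf, hp] using hh p hp
  revert hiff
  cases p.2 <;> cases h p.1 <;> cases f p.1 <;> decide

lemma ShattersF.shatters_lossSetStr [DecidableEq X] {H : Set (X → Bool)} {A : Finset X}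
    (hA : ShattersF H A) (R : X → X → Prop) :
    Shatters {s | ∃ h ∈ H, s = lossSetStr R h} (A.image fun x => (x, true)) := by
  intro T _
  obtain ⟨h, hH, hh⟩ := hA fun x => decide ((x, true) ∉ T)
  refine ⟨_, ⟨h, hH, rfl⟩, Finset.forall_mem_image.2 fun x hx => ?_⟩
  rw [mem_lossSetStr_true, hh x hx]
  simp

lemma vcDim_graphOf_le_vcDimF (H : Set (X → Bool)) :
    vcDim {s | ∃ h ∈ H, s = graphOf h} ≤ vcDimF H := by
  classical
  refine iSup₂_le fun S hS => ?_
  rw [← Finset.card_image_of_injOn hS.injOn_fst_of_graphOf]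
  exact le_iSup₂ (f := fun A (_ : ShattersF H A) => (A.card : ℕ∞)) _
    hS.shattersF_image_fst_of_graphOf

lemma vcDimF_le_vcDim_lossSetStr (H : Set (X → Bool)) (R : X → X → Prop) :
    vcDimF H ≤ vcDim {s | ∃ h ∈ H, s = lossSetStr R h} := by
  classical
  refine iSup₂_le fun A hA => ?_
  rw [← Finset.card_image_of_injective A (Prod.mk_left_injective true)]
  exact le_iSup₂
    (f := fun S (_ : Shatters {s | ∃ h ∈ H, s = lossSetStr R h} S) => (S.card : ℕ∞)) _
    (hA.shatters_lossSetStr R)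

end Shattering

theorem stmt2 {X : Type*} (H : Set (X → Bool)) (R : X → X → Prop) :
    vcDim {s | ∃ h ∈ H, s = graphOf h} ≤ vcDim {s | ∃ h ∈ H, s = lossSetStr R h} :=
  (vcDim_graphOf_le_vcDimF H).trans (vcDimF_le_vcDim_lossSetStr H R)
end

section
/- For every natural number d there exist a domain X, a hypothesis class H of functions X → {0,1}, and a manipulation relation → on X, such that VC(H) = 1 but the strategic loss class H_{ℓ→} shatters a set of size d (hence VC(H_{ℓ→}) ≥ d). -/
open MeasureTheory

/-! If every hypothesis of a class is positive at no more than one point, its graphs have VC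
dimension at most one: on a shattered set every point must be labelled positively by a single
hypothesis, so all points share their first coordinate, and their labels are then those of a
single graph.

The manipulation relation lets the point `xᵢ` move to `z_A` exactly when `i ∈ A`. The singleton
hypothesis at `z_A` is negative at every `xᵢ`, so `(xᵢ, 0)` is in its strategic loss set exactly when
`xᵢ` can reach `z_A`, i.e. when `i ∈ A`; as `A` ranges over all subsets, the points `(xᵢ, 0)` are
shattered. -/

section VCDim

variable {Z : Type*} {U : Set (Set Z)}

theorem Shatters.card_le_vcDim {S : Finset Z} (hS : Shatters U S) : (S.card : ℕ∞) ≤ vcDim U :=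
  le_iSup₂ (f := fun (S : Finset Z) (_ : Shatters U S) => (S.card : ℕ∞)) S hS

theorem vcDim_le_of_forall_shatters {n : ℕ∞} (h : ∀ S, Shatters U S → (S.card : ℕ∞) ≤ n) :
    vcDim U ≤ n :=
  iSup₂_le h

end VCDim

section Graphs

variable {X : Type*} {H : Set (X → Bool)}

theorem vcDim_graphOf_le_one (hH : ∀ h ∈ H, {x | h x = true}.Subsingleton) :
    vcDim {s | ∃ h ∈ H, s = graphOf h} ≤ 1 := by
  refine vcDim_le_of_forall_shatters fun S hS => ?_
  obtain ⟨_, ⟨h₁, h₁H, rfl⟩, hh₁⟩ := hS (S.filter fun p => p.2 = true) (S.filter_subset _)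
  obtain ⟨_, ⟨h₂, -, rfl⟩, hh₂⟩ := hS S subset_rfl
  have h₁_pos : ∀ p ∈ S, h₁ p.1 = true := fun p hp => by
    have := hh₁ p hp
    simp only [graphOf, Set.mem_ofPred_eq, Finset.mem_filter, hp, true_and] at this
    cases hp2 : p.2 <;> simp_all
  have h₂_graph : ∀ p ∈ S, p.2 = h₂ p.1 := fun p hp => (hh₂ p hp).2 hp
  have hS_sub : ∀ p ∈ S, ∀ q ∈ S, p = q := fun p hp q hq => by
    have hfst : p.1 = q.1 := hH h₁ h₁H (h₁_pos p hp) (h₁_pos q hq)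
    exact Prod.ext hfst (by rw [h₂_graph p hp, h₂_graph q hq, hfst])
  exact_mod_cast Finset.card_le_one.2 hS_sub

theorem shatters_graphOf_singleton {h₀ h₁ : X → Bool} (h₀H : h₀ ∈ H) (h₁H : h₁ ∈ H) {x : X}
    (h₀x : h₀ x = false) (h₁x : h₁ x = true) :
    Shatters {s | ∃ h ∈ H, s = graphOf h} {(x, true)} := by
  intro T _
  by_cases hxT : (x, true) ∈ T
  · refine ⟨graphOf h₁, ⟨h₁, h₁H, rfl⟩, fun z hz => ?_⟩
    rw [Finset.mem_singleton.1 hz]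
    simp [graphOf, h₁x, hxT]
  · refine ⟨graphOf h₀, ⟨h₀, h₀H, rfl⟩, fun z hz => ?_⟩
    rw [Finset.mem_singleton.1 hz]
    simp [graphOf, h₀x, hxT]

end Graphs

theorem mem_lossSetStr_false_iff {X : Type*} {R : X → X → Prop} {h : X → Bool} {x : X} :
    (x, false) ∈ lossSetStr R h ↔ h x = true ∨ ∃ x', R x x' ∧ h x' = true := by
  cases hx : h x <;> simp [lossSetStr, hx]

section SubsetRel

variable {ι : Type*}

/-- On `ι ⊕ Set ι`, `inl i` is the point `xᵢ` and `inr A` the point `z_A`. -/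
def subsetRel : ι ⊕ Set ι → ι ⊕ Set ι → Prop
  | .inl i, .inr A => i ∈ A
  | _, _ => False

theorem exists_subsetRel_boolIndicator_iff (i : ι) (A : Set ι) :
    (∃ x', subsetRel (.inl i) x' ∧ ({.inr A} : Set (ι ⊕ Set ι)).boolIndicator x' = true) ↔
      i ∈ A := by
  simp only [← Set.mem_iff_boolIndicator, Set.mem_singleton_iff, exists_eq_right]
  rfl

theorem shatters_lossSetStr_subsetRel (H : Set (ι ⊕ Set ι → Bool))
    (hH : ∀ A : Set ι, ({.inr A} : Set (ι ⊕ Set ι)).boolIndicator ∈ H) (s : Finset ι) :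
    Shatters {u | ∃ h ∈ H, u = lossSetStr subsetRel h}
      (s.map (Function.Embedding.inl.trans (Function.Embedding.sectL _ false))) := by
  intro T _
  set A : Set ι := {i | (.inl i, false) ∈ T}
  refine ⟨_, ⟨_, hH A, rfl⟩, fun z hz => ?_⟩
  obtain ⟨i, -, rfl⟩ := Finset.mem_map.1 hz
  have hxz : ({.inr A} : Set (ι ⊕ Set ι)).boolIndicator (.inl i) = false :=
    (Set.notMem_iff_boolIndicator _ _).1 (by simp)
  simp only [Function.Embedding.trans_apply, Function.Embedding.inl_apply,
    Function.Embedding.sectL_apply, mem_lossSetStr_false_iff, hxz, Bool.false_eq_true, false_or,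
    exists_subsetRel_boolIndicator_iff]
  rfl

end SubsetRel

theorem stmt3 (d : ℕ) :
    ∃ (X : Type) (H : Set (X → Bool)) (R : X → X → Prop) (S : Finset (X × Bool)),
      vcDim {s | ∃ h ∈ H, s = graphOf h} = 1 ∧
      Shatters {s | ∃ h ∈ H, s = lossSetStr R h} S ∧ S.card = d := by
  let H : Set (Fin d ⊕ Set (Fin d) → Bool) := {h | {x | h x = true}.Subsingleton}
  have indicator_mem (z : Fin d ⊕ Set (Fin d)) : ({z} : Set _).boolIndicator ∈ H := by
    simp [H, ← Set.mem_iff_boolIndicator]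
  have const_false_mem : (fun _ => false) ∈ H := by simp [H]
  have one_le_vcDim : 1 ≤ vcDim {s | ∃ h ∈ H, s = graphOf h} := by
    simpa using (shatters_graphOf_singleton const_false_mem (indicator_mem (.inr ∅)) rfl
      ((Set.mem_iff_boolIndicator _ _).1 rfl)).card_le_vcDim
  exact ⟨_, H, subsetRel, _, le_antisymm (vcDim_graphOf_le_one fun _ hh => hh) one_le_vcDim,
    shatters_lossSetStr_subsetRel H (fun _ => indicator_mem _) Finset.univ, by simp⟩
end

section
/- For any two manipulation relations → and ⇝ on X, any probability distribution P on X × {0,1} with marginal P_X on X, and any hypothesis h in a class H, the expected strategic loss under → satisfies L→_P(h) ≤ L01_P(h) + L⊥⇝_P(h) + d_{H,P_X}(→,⇝), where the three terms are the expected binary loss, the expected strategic component loss under ⇝, and the H-P_X-distance between the graphs. -/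
open MeasureTheory

/-
Pointwise, `lstr R h ≤ l01 h + lsc R h` and `lsc R h ≤ lsc R' h + |lsc R h - lsc R' h|`.
Integrating, the first bound gives the binary loss plus the component loss under `R` on the
marginal, the second trades that for the component loss under `R'` plus one of the integrals
whose supremum over `H` is `gdist`; the supremum is finite as all integrands lie in `[0, 1]`.
-/

lemma integral_le_integral_add_integral_abs_sub {α : Type*} [MeasurableSpace α] {μ : Measure α}
    {f g : α → ℝ} (hf : Integrable f μ) (hg : Integrable g μ) :
    ∫ x, f x ∂μ ≤ ∫ x, g x ∂μ + ∫ x, |f x - g x| ∂μ := by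
  have hfg : Integrable (fun x => |f x - g x|) μ := (hf.sub hg).abs
  rw [← integral_add hg hfg]
  refine integral_mono hf (hg.add hfg) fun x => ?_
  linarith [le_abs_self (f x - g x)]

section StrategicLoss

variable {X : Type*}

lemma norm_l01_le_one (h : X → Bool) (x : X) (y : Bool) : ‖l01 h x y‖ ≤ 1 := by
  unfold l01; split_ifs <;> simp

lemma norm_lsc_le_one (R : X → X → Prop) (h : X → Bool) (x : X) : ‖lsc R h x‖ ≤ 1 := by
  unfold lsc; split_ifs <;> simp

lemma norm_lstr_le_one (R : X → X → Prop) (h : X → Bool) (x : X) (y : Bool) :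
    ‖lstr R h x y‖ ≤ 1 := by
  unfold lstr; split_ifs <;> simp

lemma abs_lsc_sub_lsc_le_one (R R' : X → X → Prop) (h : X → Bool) (x : X) :
    |lsc R h x - lsc R' h x| ≤ 1 := by
  unfold lsc; split_ifs <;> simp

lemma lstr_le_l01_add_lsc (R : X → X → Prop) (h : X → Bool) (x : X) (y : Bool) :
    lstr R h x y ≤ l01 h x y + lsc R h x := by
  unfold lstr l01 lsc; split_ifs <;> simp_all

variable [MeasurableSpace X]

lemma integrable_lsc (μ : Measure X) [IsFiniteMeasure μ] {R : X → X → Prop} {h : X → Bool}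
    (hm : Measurable (lsc R h)) : Integrable (lsc R h) μ :=
  .of_bound hm.aestronglyMeasurable 1 (.of_forall (norm_lsc_le_one R h))

lemma sLoss_le_bLoss_add_scLoss_map_fst (P : Measure (X × Bool)) [IsFiniteMeasure P]
    (R : X → X → Prop) (h : X → Bool) (hm : Measurable (lsc R h))
    (hms : Measurable fun p : X × Bool => lstr R h p.1 p.2)
    (hmb : Measurable fun p : X × Bool => l01 h p.1 p.2) :
    sLoss P R h ≤ bLoss P h + scLoss (P.map Prod.fst) R h := by
  have hi01 : Integrable (fun p : X × Bool => l01 h p.1 p.2) P :=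
    .of_bound hmb.aestronglyMeasurable 1 (.of_forall fun p => norm_l01_le_one h p.1 p.2)
  have hisc : Integrable (fun p : X × Bool => lsc R h p.1) P :=
    (integrable_lsc (P.map Prod.fst) hm).comp_measurable measurable_fst
  have histr : Integrable (fun p : X × Bool => lstr R h p.1 p.2) P :=
    .of_bound hms.aestronglyMeasurable 1 (.of_forall fun p => norm_lstr_le_one R h p.1 p.2)
  rw [sLoss, bLoss, scLoss, integral_map measurable_fst.aemeasurable hm.aestronglyMeasurable,
    ← integral_add hi01 hisc]
  exact integral_mono histr (hi01.add hisc) fun p => lstr_le_l01_add_lsc R h p.1 p.2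

lemma integral_abs_lsc_sub_lsc_le_measureReal_univ (μ : Measure X) [IsFiniteMeasure μ]
    (R R' : X → X → Prop) (h : X → Bool) :
    ∫ x, |lsc R h x - lsc R' h x| ∂μ ≤ μ.real Set.univ := by
  have hbound := norm_integral_le_of_norm_le_const (μ := μ)
    (f := fun x => |lsc R h x - lsc R' h x|) (C := 1)
    (.of_forall fun x => (abs_abs (lsc R h x - lsc R' h x)).le.trans
      (abs_lsc_sub_lsc_le_one R R' h x))
  rw [one_mul, Real.norm_eq_abs] at hbound
  exact (le_abs_self _).trans hbound

lemma integral_abs_lsc_sub_lsc_le_gdist (μ : Measure X) [IsFiniteMeasure μ]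
    {H : Set (X → Bool)} (R R' : X → X → Prop) {h : X → Bool} (hH : h ∈ H) :
    ∫ x, |lsc R h x - lsc R' h x| ∂μ ≤ gdist H μ R R' :=
  le_ciSup ⟨μ.real Set.univ, by
    rintro _ ⟨g, rfl⟩
    exact integral_abs_lsc_sub_lsc_le_measureReal_univ μ R R' g.1⟩ (⟨h, hH⟩ : H)

end StrategicLoss

theorem stmt7 {X : Type*} [MeasurableSpace X] (P : Measure (X × Bool))
    [IsProbabilityMeasure P] (H : Set (X → Bool)) (R R' : X → X → Prop)
    (h : X → Bool) (hH : h ∈ H)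
    (hm : ∀ g ∈ H, Measurable (lsc R g)) (hm' : ∀ g ∈ H, Measurable (lsc R' g))
    (hms : Measurable (fun p : X × Bool => lstr R h p.1 p.2))
    (hmb : Measurable (fun p : X × Bool => l01 h p.1 p.2)) :
    sLoss P R h ≤ bLoss P h + scLoss (P.map Prod.fst) R' h
      + gdist H (P.map Prod.fst) R R' := by
  set PX := P.map Prod.fst
  have hsc : scLoss PX R h ≤ scLoss PX R' h + ∫ x, |lsc R h x - lsc R' h x| ∂PX :=
    integral_le_integral_add_integral_abs_sub (integrable_lsc PX (hm h hH))
      (integrable_lsc PX (hm' h hH))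
  calc sLoss P R h ≤ bLoss P h + scLoss PX R h :=
        sLoss_le_bLoss_add_scLoss_map_fst P R h (hm h hH) hms hmb
    _ ≤ bLoss P h + scLoss PX R' h + gdist H PX R R' := by
        linarith [integral_abs_lsc_sub_lsc_le_gdist PX R R' hH]
end
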